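/- For every integer k ≥ 2 there exists a constant c = c(k) > 0 such that for all positive integers N and a, the sum S(k,N,a) = Σ (n₁·n₂·…·n_k)^{-5/2}, taken over all k-tuples of positive integers (n₁,…,n_k) with n₁+…+n_k = N and n₁ > a and n₂ > a, satisfies S(k,N,a) ≤ c · N^{-5/2} · a^{-3/2}. -/

import Mathlib

/-!
Since the coordinates sum to `N`, some coordinate `nᵢ` is at least `N / k`, and its factor is at
most `(N / k)^{-5/2}`. A tuple with prescribed sum is determined by its other coordinates, so the
sum of the remaining factors is bounded by a product of independent one-variable sums: one of
`n₁, n₂` differs from `nᵢ` and exceeds `a`, contributing `∑_{n > a} n^{-5/2} ≤ 2 (a + 1)^{-3/2}`,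
and every other coordinate contributes `∑_{n ≥ 1} n^{-5/2} ≤ 2`. Summing over the `k` choices of
`i` gives the estimate.
-/

open Finset

theorem rpow_neg_le_rpow_mul_inv_sq {s x y : ℝ} (hs : 2 ≤ s) (hx : 0 < x) (hxy : x ≤ y) :
    y ^ (-s) ≤ x ^ (2 - s) * (y ^ 2)⁻¹ := by
  have hy : 0 < y := hx.trans_le hxy
  calc y ^ (-s) = y ^ (2 - s) * (y ^ 2)⁻¹ := by
        rw [← Real.rpow_two, ← Real.rpow_neg hy.le, ← Real.rpow_add hy]
        ring_nf
    _ ≤ x ^ (2 - s) * (y ^ 2)⁻¹ :=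
        mul_le_mul_of_nonneg_right (Real.rpow_le_rpow_of_nonpos hx hxy (by linarith))
          (by positivity)

theorem sum_Ioo_rpow_neg_le {s : ℝ} (hs : 2 ≤ s) (a M : ℕ) :
    ∑ n ∈ Ioo a M, (n : ℝ) ^ (-s) ≤ 2 * ((a : ℝ) + 1) ^ (1 - s) := by
  have ha : (0 : ℝ) < a + 1 := by positivity
  calc ∑ n ∈ Ioo a M, (n : ℝ) ^ (-s)
      ≤ ∑ n ∈ Ioo a M, ((a : ℝ) + 1) ^ (2 - s) * ((n : ℝ) ^ 2)⁻¹ :=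
        sum_le_sum fun n hn => rpow_neg_le_rpow_mul_inv_sq hs ha <| by
          exact_mod_cast (mem_Ioo.1 hn).1
    _ = ((a : ℝ) + 1) ^ (2 - s) * ∑ n ∈ Ioo a M, ((n : ℝ) ^ 2)⁻¹ := (mul_sum ..).symm
    _ ≤ ((a : ℝ) + 1) ^ (2 - s) * (2 / (a + 1)) := by
        gcongr
        exact sum_Ioo_inv_sq_le a M
    _ = 2 * ((a : ℝ) + 1) ^ (1 - s) := by
        rw [show 1 - s = (2 - s) - 1 by ring, Real.rpow_sub_one ha.ne']
        ring

theorem sum_prod_comp_succAbove_le {α : Type*} [AddCancelCommMonoid α] [DecidableEq α]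
    {m : ℕ} {N : α} {T : Finset (Fin (m + 1) → α)} (hT : ∀ f ∈ T, ∑ j, f j = N)
    (i : Fin (m + 1)) {t : Fin m → Finset α} (ht : ∀ f ∈ T, ∀ j, f (i.succAbove j) ∈ t j)
    {g : Fin m → α → ℝ} (hg : ∀ j x, 0 ≤ g j x) :
    ∑ f ∈ T, ∏ j, g j (f (i.succAbove j)) ≤ ∏ j, ∑ x ∈ t j, g j x := by
  have hinj : Set.InjOn (fun f : Fin (m + 1) → α => fun j => f (i.succAbove j)) T := by
    intro f hf f' hf' hff'
    have hrest : ∀ j, f (i.succAbove j) = f' (i.succAbove j) := congrFun hff'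
    have hi : f i = f' i := by
      have hsum := (hT f hf).trans (hT f' hf').symm
      rw [Fin.sum_univ_succAbove _ i, Fin.sum_univ_succAbove _ i] at hsum
      simp only [hrest] at hsum
      exact add_right_cancel hsum
    funext j
    rcases Fin.eq_self_or_eq_succAbove i j with rfl | ⟨l, rfl⟩
    exacts [hi, hrest l]
  calc ∑ f ∈ T, ∏ j, g j (f (i.succAbove j))
      = ∑ h ∈ T.image fun f j => f (i.succAbove j), ∏ j, g j (h j) :=
        (sum_image (f := fun h => ∏ j, g j (h j)) hinj).symm
    _ ≤ ∑ h ∈ Fintype.piFinset t, ∏ j, g j (h j) := by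
        refine sum_le_sum_of_subset_of_nonneg ?_ fun h _ _ => prod_nonneg fun j _ => hg j _
        rintro _ hh
        obtain ⟨f, hf, rfl⟩ := mem_image.1 hh
        exact Fintype.mem_piFinset.2 (ht f hf)
    _ = ∏ j, ∑ x ∈ t j, g j x := (prod_univ_sum t g).symm

theorem sum_le_sum_sum_filter_of_forall_exists {ι α M : Type*} [Fintype ι]
    [AddCommMonoid M] [PartialOrder M] [IsOrderedAddMonoid M] {s : Finset α} {f : α → M}
    (hf : ∀ x ∈ s, 0 ≤ f x) {p : ι → α → Prop} [∀ i, DecidablePred (p i)]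
    (hp : ∀ x ∈ s, ∃ i, p i x) :
    ∑ x ∈ s, f x ≤ ∑ i, ∑ x ∈ s with p i x, f x := by
  simp_rw [sum_filter]
  rw [sum_comm]
  refine sum_le_sum fun x hx => ?_
  obtain ⟨i, hi⟩ := hp x hx
  calc f x = if p i x then f x else 0 := (if_pos hi).symm
    _ ≤ ∑ j, if p j x then f x else 0 :=
        single_le_sum (f := fun j => if p j x then f x else 0)
          (fun j _ => by split_ifs <;> simp [hf x hx]) (mem_univ i)

theorem Fin.exists_sum_le_mul_apply {k : ℕ} [NeZero k] (f : Fin k → ℕ) :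
    ∃ i, ∑ j, f j ≤ k * f i := by
  obtain ⟨i, -, hi⟩ := exists_le_of_sum_le (f := fun _ => ∑ j, f j) (g := fun i => k * f i)
    univ_nonempty (by simp [← mul_sum])
  exact ⟨i, hi⟩

theorem sum_prod_rpow_neg_le_of_le_mul_apply {m : ℕ} {s : ℝ} (hs : 2 ≤ s) {N : ℕ} (hN : 0 < N)
    (a : ℕ) {i j₀ : Fin (m + 1)} (hij : j₀ ≠ i) :
    ∑ f ∈ (Fintype.piFinset fun _ => range (N + 1)) with
        (∀ j, 0 < f j) ∧ ∑ j, f j = N ∧ a < f j₀ ∧ N ≤ (m + 1) * f i,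
      ∏ j, (f j : ℝ) ^ (-s)
      ≤ ((N : ℝ) / (m + 1)) ^ (-s) * (2 ^ (m + 1) * ((a : ℝ) + 1) ^ (1 - s)) := by
  set T := (Fintype.piFinset fun _ : Fin (m + 1) => range (N + 1)).filter fun f =>
    (∀ j, 0 < f j) ∧ ∑ j, f j = N ∧ a < f j₀ ∧ N ≤ (m + 1) * f i
  set t : Fin (m + 1) → Finset ℕ := fun j => if j = j₀ then Ioo a (N + 1) else Ioo 0 (N + 1)
  set c : Fin (m + 1) → ℝ := fun j => 2 * if j = j₀ then ((a : ℝ) + 1) ^ (1 - s) else 1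
  have hc : ∀ j, 0 ≤ c j := fun j => by positivity
  have hT : ∀ f ∈ T, ∀ j, f j ∈ t j := by
    intro f hf j
    simp only [T, mem_filter, Fintype.mem_piFinset, mem_range] at hf
    obtain ⟨hrange, hpos, -, ha, -⟩ := hf
    by_cases hj : j = j₀
    · subst hj
      simpa only [t, if_true, mem_Ioo] using ⟨ha, hrange j⟩
    · simpa only [t, hj, if_false, mem_Ioo] using ⟨hpos j, hrange j⟩
  have hlarge : ∀ f ∈ T, (f i : ℝ) ^ (-s) ≤ ((N : ℝ) / (m + 1)) ^ (-s) := by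
    intro f hf
    have hle : N ≤ (m + 1) * f i := (mem_filter.1 hf).2.2.2.2
    refine Real.rpow_le_rpow_of_nonpos (by positivity) ?_ (by linarith)
    rw [div_le_iff₀ (by positivity)]
    exact_mod_cast hle.trans_eq (mul_comm _ _)
  have hsum : ∀ j, ∑ n ∈ t j, (n : ℝ) ^ (-s) ≤ c j := by
    intro j
    by_cases hj : j = j₀
    · simpa [t, c, hj] using sum_Ioo_rpow_neg_le hs a (N + 1)
    · simpa [t, c, hj] using sum_Ioo_rpow_neg_le hs 0 (N + 1)
  have hprod : ∏ l, c (i.succAbove l) ≤ 2 ^ (m + 1) * ((a : ℝ) + 1) ^ (1 - s) :=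
    calc ∏ l, c (i.succAbove l) ≤ c i * ∏ l, c (i.succAbove l) :=
          le_mul_of_one_le_left (prod_nonneg fun l _ => hc _) (by simp [c, hij.symm])
      _ = ∏ j, c j := (Fin.prod_univ_succAbove c i).symm
      _ = 2 ^ (m + 1) * ((a : ℝ) + 1) ^ (1 - s) := by
        simp only [c, prod_mul_distrib, prod_const, card_univ, Fintype.card_fin,
          Fintype.prod_ite_eq']
  calc ∑ f ∈ T, ∏ j, (f j : ℝ) ^ (-s)
      = ∑ f ∈ T, (f i : ℝ) ^ (-s) * ∏ l, (f (i.succAbove l) : ℝ) ^ (-s) := by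
        simp_rw [Fin.prod_univ_succAbove _ i]
    _ ≤ ∑ f ∈ T, ((N : ℝ) / (m + 1)) ^ (-s) * ∏ l, (f (i.succAbove l) : ℝ) ^ (-s) :=
        sum_le_sum fun f hf => mul_le_mul_of_nonneg_right (hlarge f hf) (by positivity)
    _ = ((N : ℝ) / (m + 1)) ^ (-s) * ∑ f ∈ T, ∏ l, (f (i.succAbove l) : ℝ) ^ (-s) :=
        (mul_sum ..).symm
    _ ≤ ((N : ℝ) / (m + 1)) ^ (-s) * ∏ l, ∑ n ∈ t (i.succAbove l), (n : ℝ) ^ (-s) := by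
        gcongr
        exact sum_prod_comp_succAbove_le (g := fun _ n => (n : ℝ) ^ (-s))
          (fun f hf => (mem_filter.1 hf).2.2.1) i (fun f hf l => hT f hf _)
          (fun _ _ => by positivity)
    _ ≤ ((N : ℝ) / (m + 1)) ^ (-s) * ∏ l, c (i.succAbove l) := by
        gcongr with l
        exact hsum _
    _ ≤ ((N : ℝ) / (m + 1)) ^ (-s) * (2 ^ (m + 1) * ((a : ℝ) + 1) ^ (1 - s)) := by
        gcongr

theorem sum_prod_rpow_neg_le {k : ℕ} {s : ℝ} (hs : 2 ≤ s) {N : ℕ} (hN : 0 < N) (a : ℕ)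
    {j₀ j₁ : Fin k} (hj : j₀ ≠ j₁) :
    ∑ f ∈ (Fintype.piFinset fun _ : Fin k => range (N + 1)) with
        (∀ j, 0 < f j) ∧ (∑ j, f j = N) ∧ a < f j₀ ∧ a < f j₁,
      ∏ j, (f j : ℝ) ^ (-s)
      ≤ k * (((N : ℝ) / k) ^ (-s) * (2 ^ k * ((a : ℝ) + 1) ^ (1 - s))) := by
  obtain ⟨m, rfl⟩ : ∃ m, k = m + 1 := Nat.exists_eq_add_one.2 (Fin.pos j₀)
  set S := (Fintype.piFinset fun _ : Fin (m + 1) => range (N + 1)).filter fun f =>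
    (∀ j, 0 < f j) ∧ (∑ j, f j = N) ∧ a < f j₀ ∧ a < f j₁
  calc ∑ f ∈ S, ∏ j, (f j : ℝ) ^ (-s)
      ≤ ∑ i, ∑ f ∈ S with N ≤ (m + 1) * f i, ∏ j, (f j : ℝ) ^ (-s) := by
        refine sum_le_sum_sum_filter_of_forall_exists
          (fun f _ => prod_nonneg fun j _ => Real.rpow_nonneg (f j).cast_nonneg _) fun f hf => ?_
        obtain ⟨i, hi⟩ := Fin.exists_sum_le_mul_apply f
        exact ⟨i, (mem_filter.1 hf).2.2.1 ▸ hi⟩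
    _ ≤ ∑ _i : Fin (m + 1),
          ((N : ℝ) / (m + 1)) ^ (-s) * (2 ^ (m + 1) * ((a : ℝ) + 1) ^ (1 - s)) := by
        refine sum_le_sum fun i _ => ?_
        obtain ⟨j, hj, hja⟩ :
            ∃ j, j ≠ i ∧ ∀ f : Fin (m + 1) → ℕ, a < f j₀ → a < f j₁ → a < f j := by
          by_cases hi : j₀ = i
          · exact ⟨j₁, hi ▸ hj.symm, fun _ _ h => h⟩
          · exact ⟨j₀, hi, fun _ h _ => h⟩
        refine le_trans (sum_le_sum_of_subset_of_nonneg ?_ fun f _ _ => by positivity)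
          (sum_prod_rpow_neg_le_of_le_mul_apply hs hN a hj)
        intro f hf
        simp only [S, mem_filter] at hf ⊢
        obtain ⟨⟨hrange, hpos, hsum, h₀, h₁⟩, hle⟩ := hf
        exact ⟨hrange, hpos, hsum, hja f h₀ h₁, hle⟩
    _ = _ := by simp

theorem small_sum_estimate (k : ℕ) (hk : 2 ≤ k) :
    ∃ c : ℝ, 0 < c ∧ ∀ N a : ℕ, 0 < N → 0 < a →
      ∑ f ∈ (Fintype.piFinset (fun _ : Fin k => Finset.range (N + 1))).filter
          (fun f => (∀ i, 0 < f i) ∧ (∑ i, f i = N) ∧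
            a < f ⟨0, by omega⟩ ∧ a < f ⟨1, by omega⟩),
        (∏ i, (f i : ℝ)) ^ (-(5 / 2) : ℝ)
        ≤ c * (N : ℝ) ^ (-(5 / 2) : ℝ) * (a : ℝ) ^ (-(3 / 2) : ℝ) := by
  have hk₀ : (0 : ℝ) < k := by positivity
  refine ⟨k * k ^ (5 / 2 : ℝ) * 2 ^ k, by positivity, fun N a hN ha => ?_⟩
  have hN₀ : (0 : ℝ) < N := by exact_mod_cast hN
  have hsplit :
      ((N : ℝ) / k) ^ (-(5 / 2) : ℝ) = k ^ (5 / 2 : ℝ) * (N : ℝ) ^ (-(5 / 2) : ℝ) := by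
    rw [Real.div_rpow hN₀.le hk₀.le, Real.rpow_neg hk₀.le, div_inv_eq_mul, mul_comm]
  have htail : ((a : ℝ) + 1) ^ (1 - 5 / 2 : ℝ) ≤ (a : ℝ) ^ (-(3 / 2) : ℝ) :=
    (show (1 - 5 / 2 : ℝ) = -(3 / 2) by norm_num) ▸
      Real.rpow_le_rpow_of_nonpos (by exact_mod_cast ha) (by linarith) (by norm_num)
  simp_rw [← Real.finsetProd_rpow _ _ fun i _ => Nat.cast_nonneg _]
  calc _ ≤ k * (((N : ℝ) / k) ^ (-(5 / 2) : ℝ) *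
          (2 ^ k * ((a : ℝ) + 1) ^ (1 - 5 / 2 : ℝ))) :=
        sum_prod_rpow_neg_le (by norm_num) hN a (by simp [Fin.ext_iff])
    _ = k * k ^ (5 / 2 : ℝ) * 2 ^ k * (N : ℝ) ^ (-(5 / 2) : ℝ) *
          ((a : ℝ) + 1) ^ (1 - 5 / 2 : ℝ) := by
        rw [hsplit]
        ring
    _ ≤ _ := by gcongr
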